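/- arXiv:2308.05722 — 8 statements merged into one kernel-verified Lean document; each statement's English description precedes it below -/
import Mathlib

section
/- Let D ⊆ ℝ with D ≠ {0}. If there exist a real number x and an element d' ∈ D \ {0} such that the set S = ⋃_{d ∈ D} { (x + d·n) mod |d'| : n ∈ ℤ } is finite, then there exists a ∈ ℝ such that D ⊆ a·ℤ. -/
/-!
Fix `d ∈ D`. The residues of `x + d n` for `n = 0, …, N`, where `N` is the size of the finite
set `S`, all lie in `S`, so two of them coincide: some `0 < m ≤ N` has `m d ∈ |d'| ℤ`. Since
`m ∣ N!`, every `d ∈ D` lies in `(|d'| / N!) ℤ`.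
-/

/-- The representative of `x` modulo `|y|` lying in `[0, |y|)` (for `y ≠ 0`). -/
noncomputable def modRep (y x : ℝ) : ℝ := x - |y| * (⌊x / |y|⌋ : ℤ)

lemma modRep_eq_toIcoMod {y : ℝ} (hy : y ≠ 0) (x : ℝ) :
    modRep y x = toIcoMod (abs_pos.2 hy) 0 x := by
  rw [toIcoMod, toIcoDiv_eq_floor, modRep, sub_zero, zsmul_eq_mul, mul_comm]

lemma modRep_eq_modRep_iff {y : ℝ} (hy : y ≠ 0) {a b : ℝ} :
    modRep y a = modRep y b ↔ ∃ k : ℤ, b - a = k * |y| := by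
  simp only [modRep_eq_toIcoMod hy, toIcoMod_eq_toIcoMod, zsmul_eq_mul]

lemma exists_nat_mul_eq_int_mul_abs_of_modRep_mem {y x d : ℝ} (hy : y ≠ 0) {S : Finset ℝ}
    (hS : ∀ n : ℕ, modRep y (x + d * n) ∈ S) :
    ∃ m : ℕ, 0 < m ∧ m ≤ S.card ∧ ∃ k : ℤ, m * d = k * |y| := by
  have hcard : S.card < (Finset.range (S.card + 1)).card := by simp
  obtain ⟨p, hp, q, hq, hpq, hpq_eq⟩ :=
    Finset.exists_ne_map_eq_of_card_lt_of_maps_to hcard fun n _ => hS n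
  rw [Finset.mem_range] at hp hq
  wlog hlt : p < q generalizing p q
  · exact this q hq p hp hpq.symm hpq_eq.symm (hpq.symm.lt_of_le (not_lt.1 hlt))
  obtain ⟨k, hk⟩ := (modRep_eq_modRep_iff hy).1 hpq_eq
  refine ⟨q - p, by omega, by omega, k, ?_⟩
  rw [Nat.cast_sub hlt.le, ← hk]
  ring

lemma exists_eq_div_factorial_mul {c d : ℝ} {m N : ℕ} {k : ℤ} (hm : 0 < m) (hmN : m ≤ N)
    (hd : m * d = k * c) : ∃ n : ℤ, d = c / N.factorial * n := by
  obtain ⟨j, hj⟩ := Nat.dvd_factorial hm hmN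
  have hj0 : j ≠ 0 := right_ne_zero_of_mul (hj ▸ N.factorial_ne_zero)
  refine ⟨k * j, ?_⟩
  rw [hj]
  field_simp
  push_cast
  linear_combination (j : ℝ) * hd

theorem arithmetic_lattice_lemma_general (D : Set ℝ)
    (h : ∃ x : ℝ, ∃ d' ∈ D, d' ≠ 0 ∧
      (⋃ d ∈ D, {r : ℝ | ∃ n : ℤ, r = modRep d' (x + d * n)}).Finite) :
    ∃ a : ℝ, D ⊆ {r : ℝ | ∃ n : ℤ, r = a * n} := by
  obtain ⟨x, d', -, hd', hfin⟩ := h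
  refine ⟨|d'| / hfin.toFinset.card.factorial, fun d hd => ?_⟩
  have hS (n : ℕ) : modRep d' (x + d * n) ∈ hfin.toFinset := by
    rw [Set.Finite.mem_toFinset, Set.mem_iUnion₂]
    exact ⟨d, hd, n, by push_cast; rfl⟩
  obtain ⟨m, hm, hmN, k, hk⟩ := exists_nat_mul_eq_int_mul_abs_of_modRep_mem hd' hS
  exact exists_eq_div_factorial_mul hm hmN hk

theorem arithmetic_lattice_lemma (D : Set ℝ) (hD : D ≠ {0})
    (h : ∃ x : ℝ, ∃ d' ∈ D, d' ≠ 0 ∧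
      (⋃ d ∈ D, {r : ℝ | ∃ n : ℤ, r = modRep d' (x + d * n)}).Finite) :
    ∃ a : ℝ, D ⊆ {r : ℝ | ∃ n : ℤ, r = a * n} :=
  arithmetic_lattice_lemma_general D h
end

section
/- Let d, d' be real numbers with d' ≠ 0 and d/|d'| = ℓ + p/q with ℓ ∈ ℤ, p ∈ ℕ, q ∈ ℕ, p < q, gcd(p,q) = 1 (and q = 1 if p = 0). Then for any x ∈ ℝ, the set { (x + d·n) mod |d'| : n ∈ ℤ } has exactly q elements. -/
open AddCircle

theorem modRep_eq_equivIco (y x : ℝ) [Fact (0 < |y|)] :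
    modRep y x = equivIco |y| 0 (x : AddCircle |y|) := by
  rw [coe_equivIco_mk_apply, modRep, Int.fract, sub_mul,
    div_mul_cancel₀ x (Fact.out : 0 < |y|).ne', mul_comm]

theorem ncard_range_add_zsmul {G : Type*} [AddGroup G] (x g : G) :
    (Set.range fun n : ℤ ↦ x + n • g).ncard = addOrderOf g := by
  rw [Set.range_comp' (x + ·) (· • g), ← AddSubgroup.coe_zmultiples,
    Set.ncard_image_of_injective _ (add_right_injective x), ← Nat.card_zmultiples]
  rfl

theorem AddCircle.addOrderOf_intCast_add_div_mul {𝕜 : Type*} [Field 𝕜] [LinearOrder 𝕜]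
    [IsStrictOrderedRing 𝕜] (T : 𝕜) [Fact (0 < T)] (ℓ : ℤ) {p q : ℕ} (hq : 0 < q)
    (hpq : p.Coprime q) :
    addOrderOf (((ℓ + p / q) * T : 𝕜) : AddCircle T) = q := by
  rw [add_mul, coe_add, ← zsmul_eq_mul, coe_zsmul, coe_period, smul_zero, zero_add]
  exact addOrderOf_div_of_gcd_eq_one hq hpq

theorem orbit_card_eq_denominator_general (d d' : ℝ) (hd' : d' ≠ 0) (ℓ : ℤ) (p q : ℕ)
    (hq : 0 < q) (hfrac : d / |d'| = (ℓ : ℝ) + (p : ℝ) / (q : ℝ))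
    (hcop : Nat.Coprime p q) (x : ℝ) :
    ({r : ℝ | ∃ n : ℤ, r = modRep d' (x + d * n)}).ncard = q := by
  have : Fact (0 < |d'|) := ⟨abs_pos.2 hd'⟩
  have hd : d = (ℓ + p / q) * |d'| := by
    rw [← hfrac, div_mul_cancel₀ d (abs_ne_zero.2 hd')]
  have hset : {r : ℝ | ∃ n : ℤ, r = modRep d' (x + d * n)} =
      (Subtype.val ∘ equivIco |d'| 0) ''
        Set.range fun n : ℤ ↦ (x : AddCircle |d'|) + n • (d : AddCircle |d'|) := by
    ext r
    simp [modRep_eq_equivIco, eq_comm, mul_comm d, ← zsmul_eq_mul]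
  rw [hset, Set.ncard_image_of_injective _ (Subtype.val_injective.comp (equivIco _ _).injective),
    ncard_range_add_zsmul, hd, addOrderOf_intCast_add_div_mul _ _ hq hcop]

theorem orbit_card_eq_denominator (d d' : ℝ) (hd' : d' ≠ 0) (ℓ : ℤ) (p q : ℕ)
    (hq : 0 < q) (hfrac : d / |d'| = (ℓ : ℝ) + (p : ℝ) / (q : ℝ))
    (hpq : p < q) (hcop : Nat.Coprime p q) (hp0 : p = 0 → q = 1) (x : ℝ) :
    ({r : ℝ | ∃ n : ℤ, r = modRep d' (x + d * n)}).ncard = q :=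
  orbit_card_eq_denominator_general d d' hd' ℓ p q hq hfrac hcop x
end

section
/- Let x, y be distinct real numbers and A : ℂ → ℂ an entire function such that |exp(A(z))| = 1 for all z ∈ ℝ + i{x, y} (i.e., for all z with imaginary part equal to x or to y). Then A is periodic with period 2i(x − y), i.e., A(z) = A(z + 2i(x − y)) for all z ∈ ℂ. -/
/-! Reflecting across the line `Im z = c` sends `z` to `conj z + 2ci`. If `Re A = 0` on that line,
the Schwarz reflection principle gives `A (conj z + 2ci) = -conj (A z)` for all `z`. Composing the
reflections across `Im z = y` and `Im z = x` is the translation by `2i(x - y)`, and the two sign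
changes cancel. -/

open Complex Filter Topology
open scoped ComplexConjugate

theorem Complex.frequently_im_eq_nhdsNE (z₀ : ℂ) : ∃ᶠ z in 𝓝[≠] z₀, z.im = z₀.im := by
  have hline : Tendsto (fun t : ℝ => z₀ + t) (𝓝[≠] 0) (𝓝[≠] z₀) := by
    refine tendsto_nhdsWithin_iff.2 ⟨?_, eventually_nhdsWithin_of_forall fun t ht => ?_⟩
    · exact ((continuous_const.add continuous_ofReal).tendsto' 0 z₀ (by simp)).mono_left
        nhdsWithin_le_nhds
    · simpa using ht
  exact hline.frequently (Frequently.of_forall fun t => by simp)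

theorem Differentiable.conj_apply_conj_of_forall_im_eq_zero {f : ℂ → ℂ}
    (hf : Differentiable ℂ f) (hreal : ∀ x : ℝ, (f x).im = 0) (z : ℂ) :
    conj (f (conj z)) = f z := by
  have hg : Differentiable ℂ (conj ∘ f ∘ conj) := fun w =>
    differentiableAt_conj_conj_iff.2 (hf _)
  have hline : ∃ᶠ w in 𝓝[≠] (0 : ℂ), (conj ∘ f ∘ conj) w = f w := by
    refine (frequently_im_eq_nhdsNE 0).mono fun w hw => ?_
    rw [zero_im, ← conj_eq_iff_im] at hw
    rw [Function.comp_apply, Function.comp_apply, hw, conj_eq_iff_im, ← conj_eq_iff_re.1 hw]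
    exact hreal _
  exact congrFun ((analyticOnNhd_univ_iff_differentiable.2 hg).eq_of_frequently_eq
    (analyticOnNhd_univ_iff_differentiable.2 hf) hline) z

theorem Differentiable.apply_reflect_eq_neg_conj_of_re_eq_zero {A : ℂ → ℂ}
    (hA : Differentiable ℂ A) {c : ℝ} (hRe : ∀ z : ℂ, z.im = c → (A z).re = 0) (z : ℂ) :
    A (conj z + 2 * c * I) = -conj (A z) := by
  -- `B` is `A` moved to the real axis and rotated so as to be real there.
  set B : ℂ → ℂ := fun w => I * A (w + c * I)
  have hB : Differentiable ℂ B := by fun_prop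
  have hBreal (x : ℝ) : (B x).im = 0 := by simpa [B] using hRe (x + c * I) (by simp)
  have hrefl := hB.conj_apply_conj_of_forall_im_eq_zero hBreal (z - c * I)
  have hpt : conj (z - c * I) + c * I = conj z + 2 * c * I := by
    simp only [map_sub, map_mul, conj_ofReal, conj_I]
    ring
  simp only [B, hpt, sub_add_cancel, map_mul, conj_I] at hrefl
  have hconj : conj (A (conj z + 2 * c * I)) = -A z := by
    linear_combination I * hrefl + (conj (A (conj z + 2 * c * I)) + A z) * I_sq
  simpa using congrArg conj hconj

theorem exp_modulus_one_on_two_lines_periodic_general (x y : ℝ)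
    (A : ℂ → ℂ) (hA : Differentiable ℂ A)
    (h : ∀ z : ℂ, (z.im = x ∨ z.im = y) → ‖Complex.exp (A z)‖ = 1) :
    ∀ z : ℂ, A z = A (z + 2 * Complex.I * ((x : ℂ) - (y : ℂ))) := by
  have hRe (z : ℂ) (hz : z.im = x ∨ z.im = y) : (A z).re = 0 := by
    simpa [norm_exp] using h z hz
  intro z
  have hx := hA.apply_reflect_eq_neg_conj_of_re_eq_zero (fun w hw => hRe w (.inl hw))
    (conj z + 2 * y * I)
  rw [hA.apply_reflect_eq_neg_conj_of_re_eq_zero (fun w hw => hRe w (.inr hw)) z,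
    map_neg, conj_conj, neg_neg] at hx
  rw [← hx]
  congr 1
  simp only [map_add, map_mul, conj_conj, conj_ofReal, conj_I, map_ofNat]
  ring

theorem exp_modulus_one_on_two_lines_periodic (x y : ℝ) (hxy : x ≠ y)
    (A : ℂ → ℂ) (hA : Differentiable ℂ A)
    (h : ∀ z : ℂ, (z.im = x ∨ z.im = y) → ‖Complex.exp (A z)‖ = 1) :
    ∀ z : ℂ, A z = A (z + 2 * Complex.I * ((x : ℂ) - (y : ℂ))) :=
  exp_modulus_one_on_two_lines_periodic_general x y A hA h
end

section
/- Let a ≠ 0, b ∈ ℝ, θ ∈ ℝ, and let Λ ⊆ aℤ + b. Define F(z) = c·exp(πbi/a)·exp(−(π e^{−iθ}/a) z) + c'·exp(−πbi/a)·exp((π e^{−iθ}/a) z) and H(z) = c̄·exp(πbi/a)·exp(−(π e^{−iθ}/a) z) + c̄'·exp(−πbi/a)·exp((π e^{−iθ}/a) z) for constants c, c' ∈ ℂ. Then |F(z)| = |H(z)| for every z ∈ e^{iθ}(ℝ + iΛ). -/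
/-!
Put `z = e^{iθ}(t + il)` with `l = an + b`. Then `e^{-iθ} z = t + il`, so the two exponential
factors of `F` are `e^{w}` and `e^{-w}` with `w = -πt/a - πn i`. Since `Im w ∈ πℤ`, both are real,
and `H z` is therefore the complex conjugate of `F z`.
-/

open Complex ComplexConjugate
open scoped Real

theorem Complex.conj_exp_of_im_eq_int_mul_pi {w : ℂ} {n : ℤ} (h : w.im = n * π) :
    conj (exp w) = exp w := by
  rw [conj_eq_iff_im, exp_im, h, Real.sin_int_mul_pi, mul_zero]

theorem Complex.norm_mul_add_mul_eq_norm_conj_mul_add_conj_mul {u v : ℂ} (hu : conj u = u)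
    (hv : conj v = v) (c c' : ℂ) : ‖c * u + c' * v‖ = ‖conj c * u + conj c' * v‖ := by
  rw [← hu, ← hv, ← map_mul, ← map_mul, ← map_add, norm_conj, hu, hv]

theorem exponent_on_rotated_line {a : ℝ} (ha : a ≠ 0) (b θ t : ℝ) (n : ℤ) :
    (π : ℂ) * b * I / a + -((π : ℂ) * exp (-I * θ) / a) * (exp (I * θ) * (t + I * ↑(a * n + b)))
      = ↑(-(π * t / a)) + ↑(-n * π) * I := by
  have hrot : exp (-(I * θ)) * exp (I * θ) = 1 := by rw [← exp_add]; simp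
  have ha' : (a : ℂ) ≠ 0 := ofReal_ne_zero.mpr ha
  push_cast
  rw [neg_mul I]
  field_simp
  linear_combination -(t + I * (a * n + b)) * hrot

theorem counterexample_equal_modulus (a b θ : ℝ) (ha : a ≠ 0) (Λ : Set ℝ)
    (hΛ : Λ ⊆ {r : ℝ | ∃ n : ℤ, r = a * n + b}) (c c' : ℂ) (F H : ℂ → ℂ)
    (hF : ∀ z : ℂ, F z =
      c * Complex.exp ((Real.pi : ℂ) * b * Complex.I / a) *
        Complex.exp (-((Real.pi : ℂ) * Complex.exp (-Complex.I * θ) / a) * z) +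
      c' * Complex.exp (-((Real.pi : ℂ) * b * Complex.I / a)) *
        Complex.exp (((Real.pi : ℂ) * Complex.exp (-Complex.I * θ) / a) * z))
    (hH : ∀ z : ℂ, H z =
      (starRingEnd ℂ) c * Complex.exp ((Real.pi : ℂ) * b * Complex.I / a) *
        Complex.exp (-((Real.pi : ℂ) * Complex.exp (-Complex.I * θ) / a) * z) +
      (starRingEnd ℂ) c' * Complex.exp (-((Real.pi : ℂ) * b * Complex.I / a)) *
        Complex.exp (((Real.pi : ℂ) * Complex.exp (-Complex.I * θ) / a) * z)) :
    ∀ (t : ℝ), ∀ l ∈ Λ,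
      ‖F (Complex.exp (Complex.I * θ) * ((t : ℂ) + Complex.I * l))‖
        = ‖H (Complex.exp (Complex.I * θ) * ((t : ℂ) + Complex.I * l))‖ := by
  intro t l hl
  obtain ⟨n, rfl⟩ := hΛ hl
  set z := exp (I * θ) * ((t : ℂ) + I * ↑(a * n + b))
  set w := (π : ℂ) * b * I / a + -((π : ℂ) * exp (-I * θ) / a) * z
  have hw : w = ↑(-(π * t / a)) + ↑(-n * π) * I := exponent_on_rotated_line ha b θ t n
  have hw_im : w.im = ↑(-n) * π := by simp [hw]
  have hw_neg_im : (-w).im = ↑n * π := by rw [neg_im, hw_im]; push_cast; ring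
  have hfirst : exp ((π : ℂ) * b * I / a) * exp (-((π : ℂ) * exp (-I * θ) / a) * z) = exp w :=
    (exp_add _ _).symm
  have hsecond :
      exp (-((π : ℂ) * b * I / a)) * exp ((π : ℂ) * exp (-I * θ) / a * z) = exp (-w) := by
    rw [← exp_add]
    congr 1
    ring
  rw [hF, hH, mul_assoc c, mul_assoc c', mul_assoc (conj c), mul_assoc (conj c'), hfirst, hsecond]
  exact norm_mul_add_mul_eq_norm_conj_mul_add_conj_mul (conj_exp_of_im_eq_int_mul_pi hw_im)
    (conj_exp_of_im_eq_int_mul_pi hw_neg_im) c c'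
end

section
/- Let f, h ∈ L¹([0,∞)) and let U ⊆ (0,∞) be such that 2πU is a uniqueness set for the Laplace transform. If |𝓛f(u)| = |𝓛h(u)| for all u ∈ 2πU, then |𝓛f(s)| = |𝓛h(s)| for all s ≥ 0. -/
open MeasureTheory

noncomputable def laplace (f : ℝ → ℂ) (s : ℂ) : ℂ :=
  ∫ y in Set.Ioi (0 : ℝ), f y * Complex.exp (-s * y)

/-!
For real `u ≥ 0` the convolution theorem and `𝓛f̄(u) = conj (𝓛f(u))` give
`|𝓛f(u)|² = 𝓛(f * f̄)(u)`. So `g = f * f̄ - h * h̄` is integrable with `𝓛g = 0` on `2πU`, hence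
`g = 0` a.e. by uniqueness, and then `|𝓛f(s)|² = 𝓛g(s) + |𝓛h(s)|² = |𝓛h(s)|²` for all `s ≥ 0`.
-/

open Set Complex
open scoped Convolution ComplexConjugate

/-- The paper's convolution `(f * g)(x) = ∫₀^x f(y) g(x - y) dy`. -/
noncomputable def halfLineConv (f g : ℝ → ℂ) : ℝ → ℂ :=
  (Ici 0).indicator f ⋆[ContinuousLinearMap.mul ℝ ℂ] (Ici 0).indicator g

lemma MeasureTheory.Integrable.conj {α : Type*} [MeasurableSpace α] {μ : Measure α} {φ : α → ℂ}
    (hφ : Integrable φ μ) : Integrable (fun x => conj (φ x)) μ :=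
  conjLIE.integrable_comp_iff.2 hφ

variable {f g : ℝ → ℂ}

lemma laplace_eq_integral_indicator (f : ℝ → ℂ) (s : ℂ) :
    laplace f s = ∫ y, (Ici 0).indicator f y * cexp (-s * y) := by
  simp_rw [← indicator_mul_left _ f fun y => cexp (-s * y)]
  rw [integral_indicator measurableSet_Ici, integral_Ici_eq_integral_Ioi, laplace]

lemma laplace_conj (f : ℝ → ℂ) (s : ℂ) :
    laplace (fun y => conj (f y)) s = conj (laplace f (conj s)) := by
  rw [laplace, laplace, ← integral_conj]
  congr 1 with y
  rw [map_mul, ← exp_conj, map_mul, map_neg, conj_conj, conj_ofReal]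

lemma laplace_eq_zero_of_ae_eq_zero (hf : ∀ᵐ y ∂volume.restrict (Ici 0), f y = 0) (s : ℂ) :
    laplace f s = 0 := by
  refine integral_eq_zero_of_ae ?_
  filter_upwards [ae_restrict_of_ae_restrict_of_subset Ioi_subset_Ici_self hf] with y hy
  simp [hy]

lemma integrableOn_mul_cexp_neg (hf : IntegrableOn f (Ici 0)) {s : ℂ} (hs : 0 ≤ s.re) :
    IntegrableOn (fun y => f y * cexp (-s * y)) (Ici 0) := by
  simp_rw [mul_comm (f _)]
  refine hf.bdd_mul (by fun_prop) (c := 1) ?_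
  filter_upwards [ae_restrict_mem measurableSet_Ici] with y (hy : 0 ≤ y)
  rw [norm_exp, Real.exp_le_one_iff]
  simpa using mul_nonneg hs hy

lemma laplace_sub (hf : IntegrableOn f (Ici 0)) (hg : IntegrableOn g (Ici 0)) {s : ℂ}
    (hs : 0 ≤ s.re) : laplace (f - g) s = laplace f s - laplace g s := by
  rw [laplace, laplace, laplace, ← integral_sub]
  · simp_rw [Pi.sub_apply, sub_mul]
  all_goals exact (integrableOn_mul_cexp_neg ‹_› hs).mono_set Ioi_subset_Ici_self

lemma integrable_halfLineConv (hf : IntegrableOn f (Ici 0)) (hg : IntegrableOn g (Ici 0)) :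
    Integrable (halfLineConv f g) :=
  ((integrable_indicator_iff measurableSet_Ici).2 hf).integrable_convolution _
    ((integrable_indicator_iff measurableSet_Ici).2 hg)

lemma halfLineConv_eq_zero_of_neg (f g : ℝ → ℂ) {x : ℝ} (hx : x < 0) : halfLineConv f g x = 0 := by
  refine integral_eq_zero_of_ae (Filter.Eventually.of_forall fun y => ?_)
  rcases lt_or_ge y 0 with hy | hy
  · simp [indicator_of_notMem (notMem_Ici.2 hy)]
  · simp [indicator_of_notMem (notMem_Ici.2 (by linarith : x - y < 0))]

lemma convolution_mul_cexp (φ ψ : ℝ → ℂ) (s : ℂ) (x : ℝ) :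
    (φ ⋆[ContinuousLinearMap.mul ℝ ℂ] ψ) x * cexp (-s * x) =
      ((fun y => φ y * cexp (-s * y)) ⋆[ContinuousLinearMap.mul ℝ ℂ]
        fun y => ψ y * cexp (-s * y)) x := by
  rw [convolution_def, convolution_def, ← integral_mul_const]
  congr 1 with y
  simp only [ContinuousLinearMap.mul_apply']
  rw [mul_mul_mul_comm, ← exp_add]
  congr 2
  push_cast
  ring

theorem laplace_halfLineConv (hf : IntegrableOn f (Ici 0)) (hg : IntegrableOn g (Ici 0))
    {s : ℂ} (hs : 0 ≤ s.re) : laplace (halfLineConv f g) s = laplace f s * laplace g s := by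
  have weighted {φ : ℝ → ℂ} (hφ : IntegrableOn φ (Ici 0)) :
      Integrable fun y => (Ici 0).indicator φ y * cexp (-s * y) := by
    simp_rw [← indicator_mul_left _ φ fun y => cexp (-s * y)]
    exact (integrable_indicator_iff measurableSet_Ici).2 (integrableOn_mul_cexp_neg hφ hs)
  have supported : (Ici 0).indicator (halfLineConv f g) = halfLineConv f g :=
    indicator_eq_self.2 fun x hx => not_lt.1 fun hneg => hx (halfLineConv_eq_zero_of_neg f g hneg)
  rw [laplace_eq_integral_indicator, supported, laplace_eq_integral_indicator,
    laplace_eq_integral_indicator, ← ContinuousLinearMap.mul_apply' ℝ, ←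
    integral_convolution _ (weighted hf) (weighted hg)]
  exact congrArg (integral volume) (funext (convolution_mul_cexp _ _ s))

theorem laplace_halfLineConv_conj_self (hf : IntegrableOn f (Ici 0)) {s : ℝ} (hs : 0 ≤ s) :
    laplace (halfLineConv f fun y => conj (f y)) s = (‖laplace f s‖ ^ 2 : ℝ) := by
  rw [laplace_halfLineConv hf hf.conj (by simpa using hs), laplace_conj, conj_ofReal, mul_conj', ofReal_pow]

theorem abs_laplace_extends (f h : ℝ → ℂ)
    (hf : IntegrableOn f (Set.Ici 0)) (hh : IntegrableOn h (Set.Ici 0))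
    (U : Set ℝ) (hU : U ⊆ Set.Ioi 0)
    (huniq : ∀ g : ℝ → ℂ, IntegrableOn g (Set.Ici 0) →
      (∀ u ∈ U, laplace g ((2 * Real.pi * u : ℝ) : ℂ) = 0) →
      ∀ᵐ y ∂(volume.restrict (Set.Ici (0 : ℝ))), g y = 0)
    (heq : ∀ u ∈ U, ‖laplace f ((2 * Real.pi * u : ℝ) : ℂ)‖
      = ‖laplace h ((2 * Real.pi * u : ℝ) : ℂ)‖) :
    ∀ s : ℝ, 0 ≤ s →
      ‖laplace f (s : ℂ)‖ = ‖laplace h (s : ℂ)‖ := by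
  set g := halfLineConv f (fun y => conj (f y)) - halfLineConv h fun y => conj (h y)
  have laplace_g {s : ℝ} (hs : 0 ≤ s) :
      laplace g s = ((‖laplace f s‖ ^ 2 - ‖laplace h s‖ ^ 2 : ℝ) : ℂ) := by
    rw [laplace_sub (integrable_halfLineConv hf hf.conj).integrableOn
      (integrable_halfLineConv hh hh.conj).integrableOn (by simpa using hs),
      laplace_halfLineConv_conj_self hf hs, laplace_halfLineConv_conj_self hh hs, ofReal_sub]
  have g_ae_zero : ∀ᵐ y ∂volume.restrict (Ici 0), g y = 0 :=
    huniq g ((integrable_halfLineConv hf hf.conj).sub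
      (integrable_halfLineConv hh hh.conj)).integrableOn fun u hu => by
      rw [laplace_g (by have : 0 < u := hU hu; positivity), heq u hu, sub_self, ofReal_zero]
  intro s hs
  have hsq := laplace_g hs
  rw [laplace_eq_zero_of_ae_eq_zero g_ae_zero, eq_comm, ofReal_eq_zero, sub_eq_zero] at hsq
  exact (pow_left_inj₀ (norm_nonneg _) (norm_nonneg _) two_ne_zero).1 hsq
end

section
/- Let a ≠ 0, b ∈ ℝ, and let (p_n)_{n∈ℤ} be a real sequence with p_n ≠ 0 for all n and p_n → 0 as |n| → ∞. Then the set Λ = { an + b + p_n : n ∈ ℤ } is not contained in any arithmetic progression a'ℤ + b'. -/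
open Filter

theorem perturbed_ap_not_in_ap (a b : ℝ) (ha : a ≠ 0) (p : ℤ → ℝ)
    (hp : ∀ n, p n ≠ 0) (hlim : Filter.Tendsto p Filter.cofinite (nhds 0)) :
    ¬ ∃ a' b' : ℝ, {r : ℝ | ∃ n : ℤ, r = a * n + b + p n}
      ⊆ {r : ℝ | ∃ n : ℤ, r = a' * n + b'} := by
  rintro ⟨a', b', hsub⟩
  have hmem : ∀ n : ℤ, ∃ m : ℤ, a * n + b + p n = a' * m + b' := fun n => hsub ⟨n, rfl⟩
  choose m hm using hmem
  have hd : ∀ n : ℤ, p (n + 1) - p n = a' * ((m (n+1) : ℝ) - m n) - a := by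
    intro n
    have h1 := hm n
    have h2 := hm (n + 1)
    push_cast at h2
    linarith [h1, h2]
  have hT : Tendsto p atTop (nhds 0) :=
    hlim.mono_left (by rw [Int.cofinite_eq]; exact le_sup_right)
  have hT1 : Tendsto (fun n => p (n + 1)) atTop (nhds 0) :=
    hT.comp (tendsto_atTop_add_const_right _ 1 tendsto_id)
  have hdiff : Tendsto (fun n : ℤ => p (n + 1) - p n) atTop (nhds 0) := by
    simpa using hT1.sub hT
  have hq : Tendsto (fun n : ℤ => a' * ((m (n+1) : ℝ) - m n)) atTop (nhds a) := by
    have heq : (fun n : ℤ => a' * ((m (n+1) : ℝ) - m n))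
        = fun n : ℤ => (p (n + 1) - p n) + a := by
      funext n; rw [hd n]; ring
    rw [heq]
    simpa using hdiff.add (tendsto_const_nhds (x := a))
  rcases eq_or_ne a' 0 with ha' | ha'
  · -- then a = 0
    apply ha
    have : Tendsto (fun _ : ℤ => (0 : ℝ)) atTop (nhds a) := by
      simpa [ha'] using hq
    exact (tendsto_nhds_unique tendsto_const_nhds this).symm
  · have hk : Tendsto (fun n : ℤ => ((m (n+1) - m n : ℤ) : ℝ)) atTop (nhds (a / a')) := by
      have h := hq.div_const a'
      have heq : (fun n : ℤ => a' * ((m (n+1) : ℝ) - m n) / a')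
          = fun n : ℤ => ((m (n+1) - m n : ℤ) : ℝ) := by
        funext n; push_cast; field_simp
      rwa [heq] at h
    obtain ⟨N, hN⟩ := Metric.tendsto_atTop.mp hk (1/2) (by norm_num)
    have hkeq : ∀ n ≥ N, m (n+1) - m n = m (N+1) - m N := by
      intro n hn
      have h1 := hN n hn
      have h2 := hN N le_rfl
      rw [Real.dist_eq] at h1 h2
      have habs : |((m (n+1) - m n : ℤ) : ℝ) - ((m (N+1) - m N : ℤ) : ℝ)| < 1 := by
        calc |((m (n+1) - m n : ℤ) : ℝ) - ((m (N+1) - m N : ℤ) : ℝ)|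
            ≤ |((m (n+1) - m n : ℤ) : ℝ) - a / a'| + |a / a' - ((m (N+1) - m N : ℤ) : ℝ)| :=
              abs_sub_le _ _ _
          _ < 1 := by rw [abs_sub_comm (a / a')]; linarith
      have : |(m (n+1) - m n) - (m (N+1) - m N)| < 1 := by exact_mod_cast habs
      have := abs_lt.mp this
      omega
    -- the constant difference
    set c : ℝ := p (N + 1) - p N with hc
    have hstepc : ∀ n ≥ N, p (n + 1) - p n = c := by
      intro n hn
      rw [hd n, hc, hd N]
      have := hkeq n hn
      have : ((m (n+1) : ℝ) - m n) = ((m (N+1) : ℝ) - m N) := by exact_mod_cast this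
      rw [this]
    have hc0 : c = 0 := by
      have hcongr : Tendsto (fun _ : ℤ => c) atTop (nhds 0) := by
        refine hdiff.congr' ?_
        filter_upwards [eventually_atTop.2 ⟨N, hstepc⟩] with n h using h
      exact tendsto_nhds_unique tendsto_const_nhds hcongr
    have hstep : ∀ n ≥ N, p (n + 1) = p n := by
      intro n hn; have := hstepc n hn; rw [hc0] at this; linarith
    have hconst : ∀ j : ℕ, p (N + j) = p N := by
      intro j
      induction j with
      | zero => simp
      | succ k ih =>
        have h := hstep (N + k) (le_add_of_nonneg_right (Int.ofNat_nonneg k))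
        have : (N + (k + 1 : ℕ) : ℤ) = (N + k) + 1 := by push_cast; ring
        rw [this, h]
        exact ih
    have htend : Tendsto (fun j : ℕ => p (N + j)) atTop (nhds 0) := by
      apply hT.comp
      exact tendsto_atTop_add_const_left _ N (tendsto_natCast_atTop_atTop (R := ℤ))
    have : Tendsto (fun _ : ℕ => p N) atTop (nhds 0) := by
      refine htend.congr fun j => hconst j
    exact hp N (tendsto_nhds_unique tendsto_const_nhds this)
end

section
/- Let Λ ⊆ ℝ be not contained in an arithmetic progression and θ ∈ ℝ. If F, H are entire functions with |F(z)| = |H(z)| for all z ∈ e^{iθ}(ℝ + iΛ), then there exists τ ∈ ℂ with |τ| = 1 and F = τH. -/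
/-!
Rotating by `e^{-iθ}` reduces to horizontal lines `ℝ + i l`. On such a line `z ↦ F z · conj F(z̄ + 2il)`
is entire and equals `|F|²` there, so by the identity theorem `F · F^♯_l = H · H^♯_l` on `ℂ`, where
`f^♯_l` is the Schwarz reflection of `f` across the line. Comparing two lines `l, m ∈ Λ` shows that
`2i(m - l)` is a period of the meromorphic function `F / H`. The real `s` with `2is` a period form a
closed subgroup of `ℝ` containing `Λ - Λ`; as `Λ` lies in no arithmetic progression this subgroup is
dense, hence all of `ℝ`. So `F / H` is constant along a line, hence constant, and the constant has
modulus one because `|F| = |H|` on the lines.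
-/

open Complex ComplexConjugate Filter Topology Pointwise

theorem Differentiable.eq_of_eq_on_line {f g : ℂ → ℂ} (hf : Differentiable ℂ f)
    (hg : Differentiable ℂ g) {z₀ c : ℂ} (hc : c ≠ 0)
    (h : ∀ t : ℝ, f (z₀ + t * c) = g (z₀ + t * c)) : f = g := by
  have hline : Tendsto (fun t : ℝ => z₀ + t * c) (𝓝[≠] 0) (𝓝[≠] z₀) := by
    refine tendsto_nhdsWithin_of_tendsto_nhds_of_eventually_within _ ?_ ?_
    · have : Continuous fun t : ℝ => z₀ + t * c := by fun_prop
      simpa using this.tendsto 0 |>.mono_left nhdsWithin_le_nhds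
    · filter_upwards [self_mem_nhdsWithin] with t ht
      simpa [hc] using ht
  exact (analyticOnNhd_univ_iff_differentiable.2 hf).eq_of_frequently_eq
    (analyticOnNhd_univ_iff_differentiable.2 hg) (hline.frequently (Frequently.of_forall h))

theorem Differentiable.eq_of_mul_eq_mul_right {f g k : ℂ → ℂ} (hf : Differentiable ℂ f)
    (hg : Differentiable ℂ g) (hk : Differentiable ℂ k) {z₀ : ℂ} (hk₀ : k z₀ ≠ 0)
    (h : ∀ z, f z * k z = g z * k z) : f = g := by
  have hev : ∀ᶠ z in 𝓝 z₀, f z = g z := by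
    filter_upwards [hk.continuous.continuousAt.eventually_ne hk₀] with z hz
    exact mul_right_cancel₀ hz (h z)
  exact (analyticOnNhd_univ_iff_differentiable.2 hf).eq_of_frequently_eq
    (analyticOnNhd_univ_iff_differentiable.2 hg) (hev.filter_mono nhdsWithin_le_nhds).frequently

theorem Differentiable.conj_comp_conj_add {f : ℂ → ℂ} (hf : Differentiable ℂ f) (c : ℂ) :
    Differentiable ℂ fun z => conj (f (conj z + c)) := fun _ =>
  differentiableAt_conj_conj_iff.2 ((hf.comp (differentiable_id.add_const c)) _)

theorem mul_conj_reflect_eq_of_norm_eq {F H : ℂ → ℂ} (hF : Differentiable ℂ F)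
    (hH : Differentiable ℂ H) {l : ℝ} (hl : ∀ t : ℝ, ‖F (t + l * I)‖ = ‖H (t + l * I)‖) (z : ℂ) :
    F z * conj (F (conj z + 2 * l * I)) = H z * conj (H (conj z + 2 * l * I)) := by
  refine congrFun ((hF.mul (hF.conj_comp_conj_add _)).eq_of_eq_on_line
    (hH.mul (hH.conj_comp_conj_add _)) one_ne_zero (z₀ := l * I) fun t => ?_) z
  have hpt : (l * I + t * 1 : ℂ) = t + l * I := by ring
  have hfix : conj ((t : ℂ) + l * I) + 2 * l * I = t + l * I := by
    simp only [map_add, map_mul, conj_ofReal, conj_I]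
    ring
  simp only [Pi.mul_apply, hpt, hfix, mul_conj', hl]

/-- `s` is a period of `F / H`, written without division so that zeros of `H` do not matter. -/
def IsRatioPeriod (F H : ℂ → ℂ) (s : ℂ) : Prop :=
  ∀ w, F w * H (w + s) = F (w + s) * H w

namespace IsRatioPeriod

variable {F H : ℂ → ℂ}

theorem zero : IsRatioPeriod F H 0 := fun w => by simp

theorem neg {s : ℂ} (h : IsRatioPeriod F H s) : IsRatioPeriod F H (-s) := fun w => by
  simpa [← sub_eq_add_neg] using (h (w - s)).symm

theorem add (hF : Differentiable ℂ F) (hH : Differentiable ℂ H) {p : ℂ} (hFp : F p ≠ 0)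
    (hHp : H p ≠ 0) {a b : ℂ} (ha : IsRatioPeriod F H a) (hb : IsRatioPeriod F H b) :
    IsRatioPeriod F H (a + b) := by
  have hshift : ∀ c : ℂ, Differentiable ℂ fun w : ℂ => w + c := fun c =>
    differentiable_id.add_const c
  refine congrFun ((hF.mul (hH.comp (hshift _))).eq_of_mul_eq_mul_right
    ((hF.comp (hshift _)).mul hH) ((hF.comp (hshift a)).mul (hH.comp (hshift a)))
    (z₀ := p - a) (by simpa using mul_ne_zero hFp hHp) fun w => ?_)
  have hb' := hb (w + a)
  simp only [Pi.mul_apply, Function.comp_apply, ← add_assoc] at hb' ⊢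
  linear_combination F (w + a) * H (w + a + b) * ha w + F (w + a) * H w * hb'

end IsRatioPeriod

theorem isClosed_setOf_isRatioPeriod {F H : ℂ → ℂ} (hF : Continuous F) (hH : Continuous H) :
    IsClosed {s | IsRatioPeriod F H s} := by
  simp only [IsRatioPeriod, Set.ofPred_forall]
  exact isClosed_iInter fun w => isClosed_eq (by fun_prop) (by fun_prop)

theorem isRatioPeriod_of_norm_eq_on_lines {F H : ℂ → ℂ} (hF : Differentiable ℂ F)
    (hH : Differentiable ℂ H) {l m : ℝ} (hl : ∀ t : ℝ, ‖F (t + l * I)‖ = ‖H (t + l * I)‖)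
    (hm : ∀ t : ℝ, ‖F (t + m * I)‖ = ‖H (t + m * I)‖) {p : ℂ} (hFp : F p ≠ 0) (hHp : H p ≠ 0) :
    IsRatioPeriod F H ((m - l : ℝ) * (2 * I)) := by
  have cross : ∀ z, conj (F (conj z + 2 * l * I)) * conj (H (conj z + 2 * m * I))
      = conj (F (conj z + 2 * m * I)) * conj (H (conj z + 2 * l * I)) :=
    congrFun <| ((hF.conj_comp_conj_add _).mul (hH.conj_comp_conj_add _)).eq_of_mul_eq_mul_right
      ((hF.conj_comp_conj_add _).mul (hH.conj_comp_conj_add _)) (hF.mul hH)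
      (mul_ne_zero hFp hHp) fun z => by
        simp only [Pi.mul_apply]
        linear_combination conj (H (conj z + 2 * m * I)) * H z *
            mul_conj_reflect_eq_of_norm_eq hF hH hl z -
          conj (H (conj z + 2 * l * I)) * H z * mul_conj_reflect_eq_of_norm_eq hF hH hm z
  intro u
  have h := congrArg conj (cross (conj (u - 2 * l * I)))
  rw [conj_conj, sub_add_cancel,
    show u - 2 * l * I + 2 * m * I = u + (m - l : ℝ) * (2 * I) by push_cast; ring] at h
  simpa only [map_mul, conj_conj] using h

theorem dense_addSubgroupClosure_sub {Λ : Set ℝ}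
    (hΛ : ¬ ∃ a b : ℝ, Λ ⊆ {r : ℝ | ∃ n : ℤ, r = a * n + b}) :
    Dense (AddSubgroup.closure (Λ - Λ) : Set ℝ) := by
  refine (AddSubgroup.dense_or_cyclic _).resolve_right ?_
  rintro ⟨a, ha⟩
  rcases Λ.eq_empty_or_nonempty with rfl | ⟨l₀, hl₀⟩
  · exact hΛ ⟨0, 0, Set.empty_subset _⟩
  refine hΛ ⟨a, l₀, fun l hl => ?_⟩
  have hmem : l - l₀ ∈ AddSubgroup.closure (Λ - Λ) :=
    AddSubgroup.subset_closure (Set.sub_mem_sub hl hl₀)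
  rw [ha, AddSubgroup.mem_closure_singleton] at hmem
  obtain ⟨n, hn⟩ := hmem
  exact ⟨n, by rw [zsmul_eq_mul] at hn; linarith⟩

theorem eq_div_mul_of_isRatioPeriod_line {F H : ℂ → ℂ} (hF : Differentiable ℂ F)
    (hH : Differentiable ℂ H) {c : ℂ} (hc : c ≠ 0) (h : ∀ s : ℝ, IsRatioPeriod F H (s * c))
    {p : ℂ} (hHp : H p ≠ 0) (z : ℂ) : F z = F p / H p * H z := by
  have hp := (hH.comp (differentiable_id.const_add p)).const_mul (F p) |>.eq_of_eq_on_line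
    ((hF.comp (differentiable_id.const_add p)).mul_const (H p)) hc (z₀ := 0)
    fun s => by simpa using h s p
  have := congrFun hp (z - p)
  simp only [Function.comp_apply, id, add_sub_cancel] at this
  field_simp
  linear_combination -this

theorem eq_const_mul_of_norm_eq_on_horizontal_lines {Λ : Set ℝ}
    (hΛ : ¬ ∃ a b : ℝ, Λ ⊆ {r : ℝ | ∃ n : ℤ, r = a * n + b}) {F H : ℂ → ℂ}
    (hF : Differentiable ℂ F) (hH : Differentiable ℂ H)
    (hmod : ∀ t : ℝ, ∀ l ∈ Λ, ‖F (t + l * I)‖ = ‖H (t + l * I)‖) :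
    ∃ τ : ℂ, ‖τ‖ = 1 ∧ ∀ z, F z = τ * H z := by
  obtain ⟨l₀, hl₀⟩ : Λ.Nonempty :=
    Set.nonempty_iff_ne_empty.2 fun h => hΛ ⟨0, 0, h ▸ Set.empty_subset _⟩
  by_cases hH₀ : ∀ t : ℝ, H (t + l₀ * I) = 0
  · have hF₀ : ∀ t : ℝ, F (t + l₀ * I) = 0 := fun t => by
      simpa [hH₀ t] using hmod t l₀ hl₀
    have vanish : ∀ f : ℂ → ℂ, Differentiable ℂ f → (∀ t : ℝ, f (t + l₀ * I) = 0) → f = 0 :=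
      fun f hf hf₀ => hf.eq_of_eq_on_line (differentiable_const 0) one_ne_zero (z₀ := l₀ * I)
        fun t => by simpa [add_comm] using hf₀ t
    exact ⟨1, norm_one, by simp [vanish F hF hF₀, vanish H hH hH₀]⟩
  obtain ⟨t₀, hHp⟩ := not_forall.1 hH₀
  have hFp : F (t₀ + l₀ * I) ≠ 0 := by
    rwa [← norm_ne_zero_iff, hmod t₀ l₀ hl₀, norm_ne_zero_iff]
  have hperiod : ∀ s : ℝ, IsRatioPeriod F H (s * (2 * I)) := by
    refine (dense_addSubgroupClosure_sub hΛ).induction (fun s hs => ?_)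
      ((isClosed_setOf_isRatioPeriod hF.continuous hH.continuous).preimage (by fun_prop))
    induction hs using AddSubgroup.closure_induction with
    | mem s hs =>
      obtain ⟨m, hm, l, hl, rfl⟩ := hs
      exact isRatioPeriod_of_norm_eq_on_lines hF hH (hmod · l hl) (hmod · m hm) hFp hHp
    | zero => simpa using IsRatioPeriod.zero
    | add a b _ _ ha hb => simpa [add_mul] using ha.add hF hH hFp hHp hb
    | neg a _ ha => simpa [neg_mul] using ha.neg
  refine ⟨F (t₀ + l₀ * I) / H (t₀ + l₀ * I), ?_,
    eq_div_mul_of_isRatioPeriod_line hF hH (by simp) hperiod hHp⟩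
  rw [norm_div, hmod t₀ l₀ hl₀, div_self (norm_ne_zero_iff.2 hHp)]

theorem phase_retrieval_sufficiency (Λ : Set ℝ)
    (hΛ : ¬ ∃ a b : ℝ, Λ ⊆ {r : ℝ | ∃ n : ℤ, r = a * n + b})
    (θ : ℝ) (F H : ℂ → ℂ) (hF : Differentiable ℂ F) (hH : Differentiable ℂ H)
    (hmod : ∀ (t : ℝ), ∀ l ∈ Λ,
      ‖F (Complex.exp (Complex.I * θ) * ((t : ℂ) + Complex.I * l))‖
        = ‖H (Complex.exp (Complex.I * θ) * ((t : ℂ) + Complex.I * l))‖) :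
    ∃ τ : ℂ, ‖τ‖ = 1 ∧ ∀ z : ℂ, F z = τ * H z := by
  set e := exp (I * θ)
  have he : e ≠ 0 := exp_ne_zero _
  have hrot : Differentiable ℂ fun z => e * z := differentiable_id.const_mul e
  obtain ⟨τ, hτ, hFH⟩ := eq_const_mul_of_norm_eq_on_horizontal_lines hΛ (hF.comp hrot)
    (hH.comp hrot) fun t l hl => by simpa only [Function.comp_apply, mul_comm _ I] using hmod t l hl
  refine ⟨τ, hτ, fun z => ?_⟩
  simpa only [Function.comp_apply, mul_div_cancel₀ z he] using hFH (z / e)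
end

section
/- Let θ ∈ ℝ and a, b ∈ ℝ with Λ ⊆ aℤ + b. Then there exist entire functions F, H, each a linear combination of at most two exponentials e^{ξz} with ξ ≠ 0, such that |F(z)| = |H(z)| for all z ∈ e^{iθ}(ℝ + iΛ), but F ≠ τH for every unimodular τ ∈ ℂ. -/
/-!
Rotate and rescale so that `w = ξ z + β` runs over `ℝ + iπℤ` when `z` runs over
`e^{iθ}(ℝ + iΛ)`; this is possible because `Λ` lies in a single arithmetic progression.
On that set `e^{±w}` is real, so `e^{-w} + i e^{w}` and `e^{-w} - i e^{w}` are complex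
conjugates and have the same modulus, while evaluating at `w = 0` and `w = iπ/2` shows that
the two functions are not proportional.
-/

open Complex
open scoped Real

lemma exists_ne_zero_mul_eq_int_mul_pi (a : ℝ) : ∃ k : ℝ, k ≠ 0 ∧ ∃ m : ℤ, k * a = m * π := by
  rcases eq_or_ne a 0 with rfl | ha
  · exact ⟨1, one_ne_zero, 0, by simp⟩
  · exact ⟨π / a, div_ne_zero Real.pi_ne_zero ha, 1, by field_simp; simp⟩

namespace Complex

lemma norm_add_I_mul_eq_norm_sub_I_mul {u v : ℂ} (hu : u.im = 0) (hv : v.im = 0) :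
    ‖u + I * v‖ = ‖u - I * v‖ := by
  rw [← norm_conj (u + I * v), map_add, map_mul, conj_I, conj_eq_iff_im.mpr hu,
    conj_eq_iff_im.mpr hv, neg_mul, ← sub_eq_add_neg]

lemma exp_im_eq_zero_of_im_eq_int_mul_pi {w : ℂ} {n : ℤ} (hw : w.im = n * π) :
    (exp w).im = 0 := by
  rw [exp_im, hw, Real.sin_int_mul_pi, mul_zero]

lemma norm_exp_neg_add_I_mul_exp_eq {w : ℂ} {n : ℤ} (hw : w.im = n * π) :
    ‖exp (-w) + I * exp w‖ = ‖exp (-w) - I * exp w‖ :=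
  norm_add_I_mul_eq_norm_sub_I_mul
    (exp_im_eq_zero_of_im_eq_int_mul_pi (n := -n) (by rw [neg_im, hw]; push_cast; ring))
    (exp_im_eq_zero_of_im_eq_int_mul_pi hw)

lemma not_exists_exp_neg_add_I_mul_exp_eq_mul {ξ : ℂ} (hξ : ξ ≠ 0) (β : ℂ) :
    ¬ ∃ τ : ℂ, ∀ z : ℂ, exp (-(ξ * z + β)) + I * exp (ξ * z + β)
      = τ * (exp (-(ξ * z + β)) - I * exp (ξ * z + β)) := by
  rintro ⟨τ, h⟩
  have hsubst : ∀ w : ℂ, ξ * ((w - β) / ξ) + β = w := fun w => by field_simp; ring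
  have at_zero := h ((0 - β) / ξ)
  have at_pi_div_two := h ((π / 2 * I - β) / ξ)
  rw [hsubst, neg_zero, exp_zero, mul_one] at at_zero
  rw [hsubst, exp_pi_div_two_mul_I, ← neg_mul, ← neg_div, exp_neg_pi_div_two_mul_I,
    I_mul_I] at at_pi_div_two
  have hτ : τ = 0 := by
    linear_combination (-(1 + I) / 4) * (at_zero + at_pi_div_two) + (τ / 2) * I_mul_I
  rw [hτ, zero_mul] at at_zero
  exact absurd at_zero (by simp [Complex.ext_iff])

end Complex

theorem phase_retrieval_necessity (θ a b : ℝ) (Λ : Set ℝ)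
    (hΛ : Λ ⊆ {r : ℝ | ∃ n : ℤ, r = a * n + b}) :
    ∃ F H : ℂ → ℂ,
      (∃ c₁ c₂ ξ₁ ξ₂ : ℂ, ξ₁ ≠ 0 ∧ ξ₂ ≠ 0 ∧
        (∀ z : ℂ, F z = c₁ * Complex.exp (ξ₁ * z) + c₂ * Complex.exp (ξ₂ * z)) ∧
        ∃ c₃ c₄ ξ₃ ξ₄ : ℂ, ξ₃ ≠ 0 ∧ ξ₄ ≠ 0 ∧
          ∀ z : ℂ, H z = c₃ * Complex.exp (ξ₃ * z) + c₄ * Complex.exp (ξ₄ * z)) ∧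
      (∀ (t : ℝ), ∀ l ∈ Λ,
        ‖F (Complex.exp (Complex.I * θ) * ((t : ℂ) + Complex.I * l))‖
          = ‖H (Complex.exp (Complex.I * θ) * ((t : ℂ) + Complex.I * l))‖) ∧
      ¬ ∃ τ : ℂ, ‖τ‖ = 1 ∧ ∀ z : ℂ, F z = τ * H z := by
  obtain ⟨k, hk, m, hkm⟩ := exists_ne_zero_mul_eq_int_mul_pi a
  set ξ : ℂ := k * exp (-(I * θ))
  set β : ℂ := -(I * (k * b))
  have hξ : ξ ≠ 0 := mul_ne_zero (ofReal_ne_zero.mpr hk) (exp_ne_zero _)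
  have exp_neg_affine (z : ℂ) : exp (-(ξ * z + β)) = exp (-β) * exp (-ξ * z) := by
    rw [← exp_add]; ring_nf
  have exp_affine (z : ℂ) : exp (ξ * z + β) = exp β * exp (ξ * z) := by
    rw [← exp_add]; ring_nf
  refine ⟨fun z => exp (-(ξ * z + β)) + I * exp (ξ * z + β),
    fun z => exp (-(ξ * z + β)) - I * exp (ξ * z + β),
    ⟨exp (-β), I * exp β, -ξ, ξ, neg_ne_zero.mpr hξ, hξ,
      fun z => by dsimp only; rw [exp_neg_affine, exp_affine]; ring,
      exp (-β), -(I * exp β), -ξ, ξ, neg_ne_zero.mpr hξ, hξ,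
      fun z => by dsimp only; rw [exp_neg_affine, exp_affine]; ring⟩, ?_, ?_⟩
  · rintro t l hl
    obtain ⟨n, hn⟩ := hΛ hl
    refine norm_exp_neg_add_I_mul_exp_eq (n := m * n) ?_
    have hrot : exp (-(I * θ)) * exp (I * θ) = 1 := by rw [← exp_add, neg_add_cancel, exp_zero]
    have hw : ξ * (exp (I * θ) * (t + I * l)) + β = ↑(k * t) + I * ↑(k * (l - b)) := by
      push_cast
      linear_combination (k * (t + I * l) : ℂ) * hrot
    rw [hw, add_im, ofReal_im, zero_add, mul_comm, mul_I_im, ofReal_re, hn]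
    push_cast
    linear_combination n * hkm
  · rintro ⟨τ, -, hτ⟩
    exact not_exists_exp_neg_add_I_mul_exp_eq_mul hξ β ⟨τ, hτ⟩
end
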